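/- Let G be a locally compact Hausdorff topological group such that for every open neighborhood U of the identity there exists a compact normal subgroup N_U ⊆ U for which G/N_U is a Lie group with finitely many connected components. Let 𝔑 be the family of all compact normal subgroups N of G such that G/N is a Lie group with finitely many connected components, ordered by reverse inclusion. Then (i) the map g ↦ (gN)_{N ∈ 𝔑} is an isomorphism of topological groups from G onto the inverse limit lim_{N ∈ 𝔑} G/N, and (ii) for every directed subsystem 𝔐 ⊆ 𝔑 the natural projection π_{𝔑→𝔐}: lim_{N ∈ 𝔑} G/N → lim_{M ∈ 𝔐} G/M is a surjective open map. -/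

import Mathlib

/-- A topological group is a Lie group if it carries a smooth manifold structure (modelled
on some Euclidean space) making the group operations smooth. -/
def IsLieGroup (G : Type*) [Group G] [TopologicalSpace G] : Prop :=
  ∃ (n : ℕ) (_ : ChartedSpace (EuclideanSpace ℝ (Fin n)) G),
    LieGroup (modelWithCornersSelf ℝ (EuclideanSpace ℝ (Fin n))) (⊤ : ℕ∞) G

/-- Membership in the family `𝔑`: `N` is a compact normal subgroup such that `G/N` is a
Lie group with finitely many connected components. -/
class IsLieQuotient {G : Type*} [Group G] [TopologicalSpace G] (N : Subgroup G) : Prop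
    extends toNormal : N.Normal where
  compact : IsCompact (N : Set G)
  lie : IsLieGroup (G ⧸ N)
  finiteComponents : Finite (ConnectedComponents (G ⧸ N))

instance {G : Type*} [Group G] [TopologicalSpace G]
    (i : {N : Subgroup G // IsLieQuotient N}) : (i.val).Normal :=
  i.2.toNormal

/-- The inverse limit of the quotients `G ⧸ M i` along the canonical projections, as a
subgroup of the product. -/
def invLimQuot {G : Type*} [Group G] {ι : Type*} (M : ι → Subgroup G)
    [∀ i, (M i).Normal] : Subgroup (∀ i, G ⧸ M i) where
  carrier := {x | ∀ (i j : ι) (h : M i ≤ M j),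
    QuotientGroup.map (M i) (M j) (MonoidHom.id G) (fun _ hg => h hg) (x i) = x j}
  one_mem' := fun i j h => by simp
  mul_mem' := fun {a b} ha hb i j h => by
    simp only [Pi.mul_apply, map_mul, ha i j h, hb i j h]
  inv_mem' := fun {a} ha i j h => by
    simp only [Pi.inv_apply, map_inv, ha i j h]

/-- The canonical homomorphism `ψ : G → lim_{i} G ⧸ M i`, `g ↦ (g M i)_i`. -/
def toInvLimQuot {G : Type*} [Group G] {ι : Type*} (M : ι → Subgroup G)
    [∀ i, (M i).Normal] : G →* invLimQuot M :=
  MonoidHom.codRestrict (Pi.monoidHom fun i => QuotientGroup.mk' (M i)) (invLimQuot M)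
    (fun _ _ _ _ => rfl)

/-- The natural projection `π_{ι → s}` of the inverse limit onto the inverse limit of a
subfamily. -/
def invLimProj {G : Type*} [Group G] {ι : Type*} (M : ι → Subgroup G)
    [∀ i, (M i).Normal] (s : Set ι) :
    invLimQuot M →* invLimQuot (fun j : s => M j) where
  toFun x := ⟨fun j => x.val j, fun j k h => x.2 j k h⟩
  map_one' := rfl
  map_mul' _ _ := rfl

section Aux

open Set Pointwise

/-- A Lie group has no small subgroups. -/
lemma nss_of_isLieGroup (Q : Type*) [Group Q] [TopologicalSpace Q] (hQ : IsLieGroup Q) :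
    ∃ V : Set Q, IsOpen V ∧ (1:Q) ∈ V ∧ ∀ H : Subgroup Q, (H : Set Q) ⊆ V → H = ⊥ := by
  obtain ⟨n, cs, lie⟩ := hQ
  set E := EuclideanSpace ℝ (Fin n)
  set I := modelWithCornersSelf ℝ E with hI
  set φ := chartAt E (1 : Q) with hφ
  set c₀ := φ 1 with hc₀
  set f : E × E → E := fun p => φ (φ.symm p.1 * φ.symm p.2) with hf
  have hmul : ContMDiffAt (I.prod I) I ((⊤ : ℕ∞) : WithTop ℕ∞) (fun p : Q × Q => p.1 * p.2) (1, 1) :=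
    (contMDiff_mul I _).contMDiffAt
  have h2 := (contMDiffAt_iff.mp hmul).2
  simp only [one_mul] at h2
  rw [(I.prod I).range_eq_univ, contDiffWithinAt_univ] at h2
  have hpt : (extChartAt (I.prod I) ((1 : Q), (1 : Q))) (1, 1) = (c₀, c₀) := rfl
  have hfun : (↑(extChartAt I (1:Q)) ∘ (fun p : Q × Q => p.1 * p.2) ∘
      ↑(extChartAt (I.prod I) ((1:Q),(1:Q))).symm) = f := by
    funext p; rfl
  rw [hpt, hfun] at h2
  have hsymm1 : φ.symm c₀ = 1 := φ.left_inv (mem_chart_source E 1)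
  have hf1 : ∀ a ∈ φ.target, f (a, c₀) = a := by
    intro a ha
    show φ (φ.symm a * φ.symm c₀) = a
    rw [hsymm1, mul_one, φ.right_inv ha]
  have hsd : HasStrictFDerivAt f (fderiv ℝ f (c₀, c₀)) (c₀, c₀) :=
    h2.hasStrictFDerivAt (by simp)
  set D := fderiv ℝ f (c₀, c₀) with hD
  have htgt : c₀ ∈ φ.target := φ.map_source (mem_chart_source E 1)
  have hev : (fun a => f (a, c₀)) =ᶠ[nhds c₀] id := by
    filter_upwards [φ.open_target.mem_nhds htgt] with a ha using hf1 a ha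
  have hDl : D.comp ((ContinuousLinearMap.id ℝ E).prod 0) = ContinuousLinearMap.id ℝ E := by
    have hin : HasFDerivAt (fun a : E => ((a, c₀) : E × E))
        ((ContinuousLinearMap.id ℝ E).prod 0) c₀ :=
      HasFDerivAt.prodMk (hasFDerivAt_id c₀) (hasFDerivAt_const c₀ c₀)
    have h1' : HasFDerivAt (f ∘ (fun a : E => ((a, c₀) : E × E)))
        (D.comp ((ContinuousLinearMap.id ℝ E).prod 0)) c₀ :=
      HasFDerivAt.comp (g := f) (f := fun a : E => ((a, c₀) : E × E)) c₀ hsd.hasFDerivAt hin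
    have h1 : HasFDerivAt (fun a => f (a, c₀)) (D.comp ((ContinuousLinearMap.id ℝ E).prod 0)) c₀ := h1'
    have h2' : HasFDerivAt (fun a => f (a, c₀)) (ContinuousLinearMap.id ℝ E) c₀ :=
      (hasFDerivAt_id c₀).congr_of_eventuallyEq hev
    exact h1.unique h2'
  have hDr : D.comp ((0 : E →L[ℝ] E).prod (ContinuousLinearMap.id ℝ E))
      = ContinuousLinearMap.id ℝ E := by
    have hf2 : ∀ b ∈ φ.target, f (c₀, b) = b := by
      intro b hb
      show φ (φ.symm c₀ * φ.symm b) = b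
      rw [hsymm1, one_mul, φ.right_inv hb]
    have hev2 : (fun b => f (c₀, b)) =ᶠ[nhds c₀] id := by
      filter_upwards [φ.open_target.mem_nhds htgt] with b hb using hf2 b hb
    have hin : HasFDerivAt (fun b : E => ((c₀, b) : E × E))
        ((0 : E →L[ℝ] E).prod (ContinuousLinearMap.id ℝ E)) c₀ :=
      HasFDerivAt.prodMk (hasFDerivAt_const c₀ c₀) (hasFDerivAt_id c₀)
    have h1' : HasFDerivAt (f ∘ (fun b : E => ((c₀, b) : E × E)))
        (D.comp ((0 : E →L[ℝ] E).prod (ContinuousLinearMap.id ℝ E))) c₀ :=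
      HasFDerivAt.comp (g := f) (f := fun b : E => ((c₀, b) : E × E)) c₀ hsd.hasFDerivAt hin
    have h1 : HasFDerivAt (fun b => f (c₀, b))
        (D.comp ((0 : E →L[ℝ] E).prod (ContinuousLinearMap.id ℝ E))) c₀ := h1'
    exact h1.unique ((hasFDerivAt_id c₀).congr_of_eventuallyEq hev2)
  have hDuv : ∀ u v : E, D (u, v) = u + v := by
    intro u v
    have h1 : D (u, 0) = u := by
      have := congrArg (fun (L : E →L[ℝ] E) => L u) hDl
      simpa using this
    have h2' : D (0, v) = v := by
      have := congrArg (fun (L : E →L[ℝ] E) => L v) hDr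
      simpa using this
    have : ((u, v) : E × E) = (u, 0) + (0, v) := by simp
    rw [this, map_add, h1, h2']
  have hlo := (hsd.isLittleO.def one_half_pos)
  rw [Metric.eventually_nhds_iff] at hlo
  obtain ⟨δ, hδpos, hδ⟩ := hlo
  obtain ⟨ε₁, hε₁pos, hball⟩ := Metric.isOpen_iff.mp φ.open_target c₀ htgt
  set ρ := min δ ε₁ with hρ
  have hρpos : 0 < ρ := lt_min hδpos hε₁pos
  have key : ∀ a b : E, a ∈ Metric.ball c₀ ρ → b ∈ Metric.ball c₀ ρ →
      ‖f (a, b) - a - (b - c₀)‖ ≤ 1/2 * ‖b - c₀‖ := by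
    intro a b ha hb
    have hda : dist a c₀ < δ := lt_of_lt_of_le (Metric.mem_ball.mp ha) (min_le_left _ _)
    have hdb : dist b c₀ < δ := lt_of_lt_of_le (Metric.mem_ball.mp hb) (min_le_left _ _)
    have hdist : dist (((a, b) : E × E), ((a, c₀) : E × E))
        (((c₀, c₀) : E × E), ((c₀, c₀) : E × E)) < δ := by
      rw [Prod.dist_eq, Prod.dist_eq, Prod.dist_eq]
      simp only [dist_self]
      exact max_lt (max_lt hda hdb) (max_lt hda (by positivity))
    have := hδ hdist
    simp only at this
    have hsub : ((a, b) : E × E) - (a, c₀) = (0, b - c₀) := by simp [Prod.ext_iff]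
    rw [hsub, hDuv, zero_add,
      hf1 a (hball (lt_of_lt_of_le (Metric.mem_ball.mp ha) (min_le_right _ _)))] at this
    calc ‖f (a, b) - a - (b - c₀)‖ ≤ 1/2 * ‖((0, b - c₀) : E × E)‖ := this
      _ = 1/2 * ‖b - c₀‖ := by
          rw [Prod.norm_def]; simp [max_eq_right (norm_nonneg _)]
  refine ⟨φ.source ∩ φ ⁻¹' Metric.ball c₀ ρ, φ.isOpen_inter_preimage Metric.isOpen_ball,
    ⟨mem_chart_source E 1, by simp [hρpos, hc₀]⟩, ?_⟩
  intro H hH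
  rw [Subgroup.eq_bot_iff_forall]
  intro h hh
  have hhV := hH hh
  set x := φ h with hx
  set d := ‖x - c₀‖ with hd
  have growth : ∀ k : ℕ, ‖φ (h^k) - c₀ - (k:ℝ) • (x - c₀)‖ ≤ k * (d / 2) := by
    intro k
    induction k with
    | zero => simp [hc₀]
    | succ k ih =>
      have hkH : h^k ∈ H := pow_mem hh k
      have hkV := hH hkH
      have hkball : φ (h^k) ∈ Metric.ball c₀ ρ := hkV.2
      have hxball : x ∈ Metric.ball c₀ ρ := hhV.2
      have hfa : f (φ (h^k), x) = φ (h^(k+1)) := by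
        show φ (φ.symm (φ (h^k)) * φ.symm (φ h)) = _
        rw [φ.left_inv hkV.1, φ.left_inv hhV.1, ← pow_succ]
      have est := key (φ (h^k)) x hkball hxball
      rw [hfa] at est
      have hiden : φ (h^(k+1)) - c₀ - ((k:ℝ)+1) • (x - c₀) =
          (φ (h^(k+1)) - φ (h^k) - (x - c₀)) + (φ (h^k) - c₀ - (k:ℝ) • (x - c₀)) := by
        rw [add_smul, one_smul]; abel
      calc ‖φ (h^(k+1)) - c₀ - ((k+1:ℕ):ℝ) • (x - c₀)‖
          = ‖(φ (h^(k+1)) - φ (h^k) - (x - c₀)) + (φ (h^k) - c₀ - (k:ℝ) • (x - c₀))‖ := by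
            push_cast; rw [hiden]
        _ ≤ ‖φ (h^(k+1)) - φ (h^k) - (x - c₀)‖ + ‖φ (h^k) - c₀ - (k:ℝ) • (x - c₀)‖ :=
            norm_add_le _ _
        _ ≤ 1/2 * d + k * (d/2) := add_le_add est ih
        _ = (k+1 : ℕ) * (d/2) := by push_cast; ring
  have hbnd : ∀ k : ℕ, (k:ℝ) * (d/2) < ρ := by
    intro k
    have hkH : h^k ∈ H := pow_mem hh k
    have hkball : φ (h^k) ∈ Metric.ball c₀ ρ := (hH hkH).2
    have h1 : ‖(k:ℝ) • (x - c₀)‖ - ‖φ (h^k) - c₀ - (k:ℝ) • (x - c₀)‖ ≤ ‖φ (h^k) - c₀‖ := by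
      have := norm_sub_norm_le ((k:ℝ) • (x - c₀)) ((k:ℝ) • (x - c₀) - (φ (h^k) - c₀))
      simp only [sub_sub_cancel] at this
      calc ‖(k:ℝ) • (x - c₀)‖ - ‖φ (h^k) - c₀ - (k:ℝ) • (x - c₀)‖
          = ‖(k:ℝ) • (x - c₀)‖ - ‖(k:ℝ) • (x - c₀) - (φ (h^k) - c₀)‖ := by
            rw [norm_sub_rev]
        _ ≤ ‖φ (h^k) - c₀‖ := this
    have h2' : ‖φ (h^k) - c₀‖ < ρ := by
      rw [← dist_eq_norm]; exact Metric.mem_ball.mp hkball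
    have h3 : ‖(k:ℝ) • (x - c₀)‖ = k * d := by
      rw [norm_smul]; simp [hd]
    nlinarith [growth k]
  have hd0 : d = 0 := by
    by_contra hne
    have hdpos : 0 < d := lt_of_le_of_ne (norm_nonneg _) (Ne.symm hne)
    obtain ⟨k, hk⟩ := exists_nat_gt (2 * ρ / d)
    have heq : ρ = (2 * ρ / d) * (d / 2) := by field_simp
    have hlt := mul_lt_mul_of_pos_right hk (half_pos hdpos)
    linarith [hbnd k]
  have hxc : x = c₀ := by
    have h0 : ‖x - c₀‖ = 0 := hd0
    exact sub_eq_zero.mp (norm_eq_zero.mp h0)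
  exact φ.injOn hhV.1 (mem_chart_source E 1) hxc

variable {G : Type*} [Group G] [TopologicalSpace G] [IsTopologicalGroup G]

omit [IsTopologicalGroup G] in
/-- Since `G ⧸ N` has no small subgroups, any subgroup inside a suitable identity
neighborhood of `G` is contained in `N`. -/
lemma exists_open_forall_le (N : Subgroup G) [h : IsLieQuotient N] :
    ∃ U : Set G, IsOpen U ∧ (1:G) ∈ U ∧ ∀ K : Subgroup G, (K : Set G) ⊆ U → K ≤ N := by
  obtain ⟨V, hVopen, hV1, hV⟩ := nss_of_isLieGroup (G ⧸ N) h.lie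
  refine ⟨((↑) : G → G ⧸ N) ⁻¹' V, hVopen.preimage continuous_quot_mk, hV1, ?_⟩
  intro K hK g hg
  have himg : ((K.map (QuotientGroup.mk' N) : Subgroup (G ⧸ N)) : Set (G ⧸ N)) ⊆ V := by
    rintro - ⟨k, hk, rfl⟩
    exact hK hk
  have hbot := hV _ himg
  have : (g : G ⧸ N) ∈ K.map (QuotientGroup.mk' N) := ⟨g, hg, rfl⟩
  rw [hbot, Subgroup.mem_bot] at this
  exact (QuotientGroup.eq_one_iff g).mp this

variable {ι : Type*}

/-- Surjectivity of the canonical map to the inverse limit, for a directed family of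
compact normal subgroups. -/
lemma surjective_toInvLimQuot [T2Space G] (M : ι → Subgroup G) [∀ i, (M i).Normal]
    (hc : ∀ i, IsCompact (M i : Set G))
    (hdir : ∀ i j, ∃ k, M k ≤ M i ∧ M k ≤ M j) :
    Function.Surjective (toInvLimQuot M) := by
  intro x
  cases isEmpty_or_nonempty ι with
  | inl hemp =>
    exact ⟨1, Subtype.ext (funext fun i => isEmptyElim i)⟩
  | inr hne =>
    have hrep : ∀ i, ∃ g : G, ((g : G ⧸ M i)) = x.val i :=
      fun i => QuotientGroup.mk_surjective (x.val i)
    choose g₀ hg₀ using hrep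
    set Z : ι → Set G := fun i => g₀ i • (M i : Set G) with hZdef
    have hZ : ∀ i (h : G), h ∈ Z i ↔ ((h : G ⧸ M i)) = x.val i := by
      intro i h
      rw [Set.mem_smul_set_iff_inv_smul_mem, smul_eq_mul, ← hg₀ i, eq_comm, QuotientGroup.eq]
      exact Iff.rfl
    have hZne : ∀ i, (Z i).Nonempty :=
      fun i => ⟨g₀ i, (hZ i (g₀ i)).mpr (hg₀ i)⟩
    have hZc : ∀ i, IsCompact (Z i) := fun i => (hc i).smul (g₀ i)
    have hZcl : ∀ i, IsClosed (Z i) := fun i => (hZc i).isClosed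
    have hmono : ∀ i j, M i ≤ M j → Z i ⊆ Z j := by
      intro i j hle h hh
      rw [hZ] at hh ⊢
      have hth := x.2 i j hle
      rw [← hh] at hth
      have hmap : QuotientGroup.map (M i) (M j) (MonoidHom.id G) (fun _ hg => hle hg)
          ((h : G ⧸ M i)) = ((h : G ⧸ M j)) :=
        QuotientGroup.map_mk' (M i) (M j) (MonoidHom.id G) (fun _ hg => hle hg) h
      rw [← hth, hmap]
    have hZdir : Directed (· ⊇ ·) Z := by
      intro i j
      obtain ⟨k, hki, hkj⟩ := hdir i j
      exact ⟨k, hmono k i hki, hmono k j hkj⟩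
    obtain ⟨g, hg⟩ :=
      IsCompact.nonempty_iInter_of_directed_nonempty_isCompact_isClosed Z hZdir hZne hZc hZcl
    refine ⟨g, Subtype.ext (funext fun i => ?_)⟩
    exact (hZ i g).mp (Set.mem_iInter.mp hg i)

/-- Openness of the canonical map to the inverse limit. -/
lemma isOpenMap_toInvLimQuot [T2Space G] (M : ι → Subgroup G) [∀ i, (M i).Normal]
    (hc : ∀ i, IsCompact (M i : Set G))
    (hdir : ∀ i j, ∃ k, M k ≤ M i ∧ M k ≤ M j) :
    IsOpenMap (toInvLimQuot M) := by
  have hsurj := surjective_toInvLimQuot M hc hdir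
  intro W hW
  cases isEmpty_or_nonempty ι with
  | inl hemp =>
    haveI : Subsingleton (invLimQuot M) :=
      ⟨fun a b => Subtype.ext (funext fun i => isEmptyElim i)⟩
    rcases W.eq_empty_or_nonempty with rfl | ⟨g, hg⟩
    · simp
    · have : (toInvLimQuot M) '' W = Set.univ := by
        refine Set.eq_univ_iff_forall.mpr fun y => ?_
        exact ⟨g, hg, Subsingleton.elim _ _⟩
      rw [this]; exact isOpen_univ
  | inr hne =>
    rw [isOpen_iff_forall_mem_open]
    rintro y ⟨g, hgW, rfl⟩
    set T : Set G := ⋂ i, (M i : Set G) with hT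
    set W' := W * T with hW'
    have hTsub : ∀ i, T ⊆ M i := fun i => Set.iInter_subset _ i
    have h1T : (1:G) ∈ T := Set.mem_iInter.mpr fun i => (M i).one_mem
    have hWW' : W ⊆ W' := fun w hw => ⟨w, hw, 1, h1T, mul_one w⟩
    have hW'open : IsOpen W' := hW.mul_right
    have himg : ∀ h ∈ W', toInvLimQuot M h ∈ (toInvLimQuot M) '' W := by
      rintro - ⟨w, hw, t, ht, rfl⟩
      refine ⟨w, hw, ?_⟩
      refine Subtype.ext (funext fun i => ?_)
      show ((w : G ⧸ M i)) = ((w * t : G) : G ⧸ M i)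
      exact QuotientGroup.eq.mpr (by simpa using hTsub i ht)
    have hgW' : g ∈ W' := hWW' hgW
    -- find an index with g • M i ⊆ W'
    have hex : ∃ i, g • (M i : Set G) ⊆ W' := by
      by_contra hcon
      push_neg at hcon
      set Z : ι → Set G := fun i => (g • (M i : Set G)) \ W' with hZdef
      have hZne : ∀ i, (Z i).Nonempty := by
        intro i
        obtain ⟨h, hh1, hh2⟩ := Set.not_subset.mp (hcon i)
        exact ⟨h, hh1, hh2⟩
      have hZc : ∀ i, IsCompact (Z i) := fun i => ((hc i).smul g).diff hW'open
      have hZcl : ∀ i, IsClosed (Z i) := fun i => (hZc i).isClosed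
      have hZdir : Directed (· ⊇ ·) Z := by
        intro i j
        obtain ⟨k, hki, hkj⟩ := hdir i j
        refine ⟨k, fun h hh => ⟨?_, hh.2⟩, fun h hh => ⟨?_, hh.2⟩⟩
        · exact Set.smul_set_mono hki hh.1
        · exact Set.smul_set_mono hkj hh.1
      obtain ⟨h, hh⟩ :=
        IsCompact.nonempty_iInter_of_directed_nonempty_isCompact_isClosed Z hZdir hZne hZc hZcl
      rw [Set.mem_iInter] at hh
      have hmem : ∀ i, g⁻¹ * h ∈ M i := by
        intro i
        have := (hh i).1
        rwa [Set.mem_smul_set_iff_inv_smul_mem, smul_eq_mul] at this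
      obtain ⟨w, hw, t, ht, hwt⟩ := hgW'
      have hwt' : w * t = g := hwt
      have : h ∈ W' := by
        refine ⟨w, hw, t * (g⁻¹ * h), Set.mem_iInter.mpr fun i =>
          (M i).mul_mem (hTsub i ht) (hmem i), ?_⟩
        show w * (t * (g⁻¹ * h)) = h
        rw [← mul_assoc, hwt', mul_inv_cancel_left]
      exact (hh (Classical.arbitrary ι)).2 this
    obtain ⟨i, hi⟩ := hex
    obtain ⟨V, hV, hVsub⟩ :=
      compact_open_separated_mul_right ((hc i).smul g) hW'open hi
    obtain ⟨V', hV'sub, hV'open, h1V'⟩ := mem_nhds_iff.mp hV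
    refine ⟨Subtype.val ⁻¹' ((fun p : ∀ j, G ⧸ M j => p i) ⁻¹'
      (((↑) : G → G ⧸ M i) '' (g • V'))), ?_, ?_, ?_⟩
    · -- contained in the image
      rintro y hy
      obtain ⟨h, rfl⟩ := hsurj y
      simp only [Set.mem_preimage] at hy
      obtain ⟨u, hu, huh⟩ := hy
      obtain ⟨v, hv, rfl⟩ := hu
      have hmem : (g • v)⁻¹ * h ∈ M i := by
        have : ((g • v : G) : G ⧸ M i) = ((h : G) : G ⧸ M i) := by
          exact huh
        exact QuotientGroup.eq.mp this
      set m := (g • v)⁻¹ * h with hm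
      have hh' : h = g * v * m := by
        simp only [hm, smul_eq_mul]
        group
      have hmW' : h ∈ W' := by
        have hmm : v * m * v⁻¹ ∈ M i := Subgroup.Normal.conj_mem (inferInstance : (M i).Normal) m hmem v
        have : h = (g * (v * m * v⁻¹)) * v := by rw [hh']; group
        rw [this]
        refine hVsub ?_
        exact Set.mul_mem_mul (Set.smul_mem_smul_set hmm) (hV'sub hv)
      exact himg h hmW'
    · -- open
      have himgopen : IsOpen (((↑) : G → G ⧸ M i) '' (g • V')) :=
        QuotientGroup.isOpenMap_coe _ (hV'open.smul g)
      exact himgopen.preimage ((continuous_apply i).comp continuous_subtype_val)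
    · -- membership
      exact ⟨g • (1:G), Set.smul_mem_smul_set h1V', by rw [smul_eq_mul, mul_one]; rfl⟩

end Aux

/-- For a locally compact Hausdorff group `G` in which every identity
neighborhood contains a compact normal subgroup with a Lie quotient having finitely many
components, the canonical map onto the inverse limit over the family `𝔑` of all such
subgroups is an isomorphism of topological groups, and each projection onto the limit of a
directed subsystem is a surjective open map. -/
theorem stmt_7 {G : Type*} [Group G] [TopologicalSpace G] [IsTopologicalGroup G]
    [LocallyCompactSpace G] [T2Space G]
    (hU : ∀ U : Set G, IsOpen U → (1 : G) ∈ U →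
      ∃ N : Subgroup G, IsLieQuotient N ∧ (N : Set G) ⊆ U) :
    (Function.Bijective
        (toInvLimQuot (fun i : {N : Subgroup G // IsLieQuotient N} => i.val)) ∧
      Continuous (toInvLimQuot (fun i : {N : Subgroup G // IsLieQuotient N} => i.val)) ∧
      IsOpenMap (toInvLimQuot (fun i : {N : Subgroup G // IsLieQuotient N} => i.val))) ∧
    ∀ s : Set {N : Subgroup G // IsLieQuotient N},
      (∀ i ∈ s, ∀ j ∈ s, ∃ k ∈ s, k.val ≤ i.val ⊓ j.val) →
      Function.Surjective
          (invLimProj (fun i : {N : Subgroup G // IsLieQuotient N} => i.val) s) ∧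
        IsOpenMap
          (invLimProj (fun i : {N : Subgroup G // IsLieQuotient N} => i.val) s) := by
  classical
  have hcomp : ∀ i : {N : Subgroup G // IsLieQuotient N}, IsCompact ((i.val : Subgroup G) : Set G) :=
    fun i => i.2.compact
  have hdir : ∀ i j : {N : Subgroup G // IsLieQuotient N},
      ∃ k : {N : Subgroup G // IsLieQuotient N}, k.val ≤ i.val ∧ k.val ≤ j.val := by
    intro i j
    haveI := i.2; haveI := j.2
    obtain ⟨Ui, hUi, h1i, hi⟩ := exists_open_forall_le i.val
    obtain ⟨Uj, hUj, h1j, hj⟩ := exists_open_forall_le j.val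
    obtain ⟨N, hN, hsub⟩ := hU (Ui ∩ Uj) (hUi.inter hUj) ⟨h1i, h1j⟩
    exact ⟨⟨N, hN⟩, hi N (fun g hg => (hsub hg).1), hj N (fun g hg => (hsub hg).2)⟩
  have hsurj := surjective_toInvLimQuot (fun i : {N : Subgroup G // IsLieQuotient N} => i.val)
    hcomp hdir
  have hopen := isOpenMap_toInvLimQuot (fun i : {N : Subgroup G // IsLieQuotient N} => i.val)
    hcomp hdir
  have hinj : Function.Injective
      (toInvLimQuot (fun i : {N : Subgroup G // IsLieQuotient N} => i.val)) := by
    intro a b hab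
    by_contra hne
    have hz : a⁻¹ * b ≠ 1 := fun hc => hne (by
      have := inv_mul_eq_one.mp hc; exact this)
    obtain ⟨N, hN, hsub⟩ := hU ({a⁻¹ * b}ᶜ) isOpen_compl_singleton
      (Set.mem_compl_singleton_iff.mpr (Ne.symm hz))
    have hcoord : ((a : G ⧸ N)) = ((b : G ⧸ N)) :=
      congrFun (congrArg Subtype.val hab) ⟨N, hN⟩
    exact hsub (QuotientGroup.eq.mp hcoord) rfl
  have hcont : Continuous
      (toInvLimQuot (fun i : {N : Subgroup G // IsLieQuotient N} => i.val)) := by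
    apply Continuous.subtype_mk
    exact continuous_pi fun i => continuous_quot_mk
  refine ⟨⟨⟨hinj, hsurj⟩, hcont, hopen⟩, ?_⟩
  intro s hs
  have hdirs : ∀ i j : s, ∃ k : s, (k : {N : Subgroup G // IsLieQuotient N}).val ≤
      (i : {N : Subgroup G // IsLieQuotient N}).val ∧
      (k : {N : Subgroup G // IsLieQuotient N}).val ≤
      (j : {N : Subgroup G // IsLieQuotient N}).val := by
    intro i j
    obtain ⟨k, hks, hk⟩ := hs i i.2 j j.2
    exact ⟨⟨k, hks⟩, le_trans hk inf_le_left, le_trans hk inf_le_right⟩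
  have hcomps : ∀ j : s, IsCompact (((j : {N : Subgroup G // IsLieQuotient N}).val : Subgroup G) : Set G) :=
    fun j => (j : {N : Subgroup G // IsLieQuotient N}).2.compact
  have hsurjs := surjective_toInvLimQuot
    (fun j : s => (j : {N : Subgroup G // IsLieQuotient N}).val) hcomps hdirs
  have hopens := isOpenMap_toInvLimQuot
    (fun j : s => (j : {N : Subgroup G // IsLieQuotient N}).val) hcomps hdirs
  have hfact : ∀ g : G,
      invLimProj (fun i : {N : Subgroup G // IsLieQuotient N} => i.val) s
        (toInvLimQuot (fun i : {N : Subgroup G // IsLieQuotient N} => i.val) g)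
      = toInvLimQuot (fun j : s => (j : {N : Subgroup G // IsLieQuotient N}).val) g :=
    fun g => Subtype.ext rfl
  constructor
  · intro y
    obtain ⟨g, rfl⟩ := hsurjs y
    exact ⟨toInvLimQuot (fun i : {N : Subgroup G // IsLieQuotient N} => i.val) g, hfact g⟩
  · intro O hO
    have heq : invLimProj (fun i : {N : Subgroup G // IsLieQuotient N} => i.val) s '' O =
        toInvLimQuot (fun j : s => (j : {N : Subgroup G // IsLieQuotient N}).val) ''
          (toInvLimQuot (fun i : {N : Subgroup G // IsLieQuotient N} => i.val) ⁻¹' O) := by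
      ext y
      constructor
      · rintro ⟨x, hx, rfl⟩
        obtain ⟨g, rfl⟩ := hsurj x
        exact ⟨g, hx, (hfact g).symm⟩
      · rintro ⟨g, hg, rfl⟩
        exact ⟨toInvLimQuot (fun i : {N : Subgroup G // IsLieQuotient N} => i.val) g, hg, hfact g⟩
    rw [heq]
    exact hopens _ (hO.preimage hcont)
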